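/- arXiv:2501.01502 — 4 statements merged into one kernel-verified Lean document; each statement's English description precedes it below -/
import Mathlib

section
/- Let h be a monic irreducible divisor of x^M − 1 in F[x], let φ : F[x]/(x^M − 1) → F[x]/(x^{2n} − 1) be the F-algebra homomorphism induced by x ↦ x^ℓ, and let ê ∈ F[x]/(x^M − 1) be an idempotent generating the ideal generated by the image of (x^M − 1)/h. Suppose that for each monic irreducible polynomial p dividing x^{2n} − 1 an idempotent e_p ∈ F[x]/(x^{2n} − 1) generating the ideal generated by the image of (x^{2n} − 1)/p is given. Then φ(ê) = ∑_p e_p, where the sum ranges over all monic irreducible divisors p of x^{2n} − 1 that divide h(x^ℓ). -/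
open Polynomial

/-- `Rq F N` is the quotient ring `F[x]/(x^N - 1)`. -/
abbrev Rq (F : Type*) [Field F] (N : ℕ) : Type _ :=
  F[X] ⧸ Ideal.span ({X ^ N - 1} : Set F[X])

/-- The canonical projection `F[x] → F[x]/(x^N - 1)`. -/
noncomputable abbrev mkq (F : Type*) [Field F] (N : ℕ) : F[X] →+* Rq F N :=
  Ideal.Quotient.mk (Ideal.span ({X ^ N - 1} : Set F[X]))

/-!
Both sides are idempotents, and an idempotent generator of a principal ideal is unique, so it
suffices that both generate the ideal of `c = t(x^ℓ)`, where `x^M - 1 = h t`. For `φ ê` this holds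
because `φ` is the substitution `x ↦ x^ℓ`. For the sum, `x^{2n} - 1 = h(x^ℓ) c` is squarefree, so
`h(x^ℓ)` is the product of the distinct monic irreducibles `p` in the sum. The `e_p` are orthogonal,
since `x^{2n} - 1` divides `(x^{2n} - 1)/p · (x^{2n} - 1)/q` for `p ≠ q`. A Bezout identity
`∑ μ_p ∏_{q ≠ p} q = 1` for the pairwise coprime `p` puts `c` in the ideal generated by `∑ e_p`.
-/

theorem IsIdempotentElem.eq_of_span_singleton_eq {R : Type*} [CommRing R] {a b : R}
    (ha : IsIdempotentElem a) (hb : IsIdempotentElem b)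
    (hab : Ideal.span {a} = Ideal.span {b}) : a = b := by
  obtain ⟨x, hx⟩ := Ideal.span_singleton_le_span_singleton.mp hab.le
  obtain ⟨y, hy⟩ := Ideal.span_singleton_le_span_singleton.mp hab.ge
  calc a = b * a := by rw [hx, ← mul_assoc, hb.eq]
    _ = a * b := mul_comm _ _
    _ = b := by rw [hy, ← mul_assoc, ha.eq]

theorem mul_eq_zero_of_span_singleton_eq {R : Type*} [CommRing R] {a b c d : R}
    (hac : Ideal.span {a} = Ideal.span {c}) (hbd : Ideal.span {b} = Ideal.span {d})
    (hcd : c * d = 0) : a * b = 0 := by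
  obtain ⟨x, rfl⟩ := Ideal.span_singleton_le_span_singleton.mp hac.le
  obtain ⟨y, rfl⟩ := Ideal.span_singleton_le_span_singleton.mp hbd.le
  rw [mul_mul_mul_comm, hcd, zero_mul]

section ProductModulus

variable {A B ι : Type*} [CommRing A] [CommRing B] [Fintype ι] [DecidableEq ι] (π : A →+* B)
  {s : ι → A} {c : A} {e : ι → B}

theorem OrthogonalIdempotents.of_span_singleton_eq_mul_prod_compl (hc : π (c * ∏ i, s i) = 0)
    (he_idem : ∀ i, IsIdempotentElem (e i))
    (he : ∀ i, Ideal.span {e i} = Ideal.span {π (c * ∏ j ∈ {i}ᶜ, s j)}) :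
    OrthogonalIdempotents e := by
  refine ⟨he_idem, fun i j hij => mul_eq_zero_of_span_singleton_eq (he i) (he j) ?_⟩
  obtain ⟨r, hr⟩ : s j ∣ ∏ k ∈ {i}ᶜ, s k :=
    Finset.dvd_prod_of_mem s (by simpa using hij.symm)
  rw [Fintype.prod_eq_mul_prod_compl j s] at hc
  rw [← map_mul, hr, show c * (s j * r) * (c * ∏ k ∈ {j}ᶜ, s k)
      = c * r * (c * (s j * ∏ k ∈ {j}ᶜ, s k)) by ring, map_mul, hc, mul_zero]

theorem Ideal.span_sum_eq_span_singleton_of_pairwise_isCoprime (he_ortho : OrthogonalIdempotents e)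
    (hs : Pairwise fun i j => IsCoprime (s i) (s j)) (hc : π (c * ∏ i, s i) = 0)
    (he : ∀ i, Ideal.span {e i} = Ideal.span {π (c * ∏ j ∈ {i}ᶜ, s j)}) :
    Ideal.span {∑ i, e i} = Ideal.span {π c} := by
  apply le_antisymm
  · refine (Ideal.span_singleton_le_iff_mem _).mpr (Ideal.sum_mem _ fun i _ => ?_)
    rw [← Ideal.span_singleton_le_iff_mem, he i, Ideal.span_singleton_le_span_singleton]
    exact map_dvd π (dvd_mul_right _ _)
  rw [Ideal.span_singleton_le_iff_mem]
  have hmem : ∀ i, π (c * ∏ j ∈ {i}ᶜ, s j) ∈ Ideal.span {∑ i, e i} := fun i => by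
    rw [← Ideal.span_singleton_le_iff_mem, ← he i, Ideal.span_singleton_le_span_singleton]
    exact ⟨e i, by rw [mul_comm, he_ortho.mul_sum_of_mem (Finset.mem_univ i)]⟩
  cases isEmpty_or_nonempty ι
  · simp_all
  obtain ⟨μ, hμ⟩ := (exists_sum_eq_one_iff_pairwise_coprime' (s := s)).mpr hs
  have hc_eq : π c = ∑ i, π (μ i) * π (c * ∏ j ∈ {i}ᶜ, s j) := by
    simp only [← map_mul, ← map_sum]
    congr 1
    calc c = c * ∑ i, μ i * ∏ j ∈ {i}ᶜ, s j := by rw [hμ, mul_one]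
      _ = _ := by rw [Finset.mul_sum]; exact Finset.sum_congr rfl fun i _ => by ring
  rw [hc_eq]
  exact Ideal.sum_mem _ fun i _ => Ideal.mul_mem_left _ _ (hmem i)

end ProductModulus

theorem AlgHom.apply_mk_eq_mk_comp {R : Type*} [CommRing R] {I J : Ideal R[X]}
    (φ : R[X] ⧸ I →ₐ[R] R[X] ⧸ J) {q : R[X]}
    (hq : φ (Ideal.Quotient.mk I X) = Ideal.Quotient.mk J q) (f : R[X]) :
    φ (Ideal.Quotient.mk I f) = Ideal.Quotient.mk J (f.comp q) := by
  have hext : φ.comp (Ideal.Quotient.mkₐ R I) = (Ideal.Quotient.mkₐ R J).comp (aeval q) :=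
    Polynomial.algHom_ext (by simpa using hq)
  simpa [comp_eq_aeval] using AlgHom.congr_fun hext f

theorem Polynomial.isCoprime_of_monic_of_irreducible {F : Type*} [Field F] {p q : F[X]}
    (hp : p.Monic) (hq : q.Monic) (hp_irr : Irreducible p) (hq_irr : Irreducible q)
    (hpq : p ≠ q) : IsCoprime p q :=
  (hp_irr.coprime_iff_not_dvd).mpr fun hdvd =>
    hpq (eq_of_monic_of_associated hp hq (hp_irr.associated_of_dvd hq_irr hdvd))

theorem Polynomial.Monic.prod_eq_self_of_squarefree {F : Type*} [Field F] {H : F[X]}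
    (hH : H.Monic) (hsq : Squarefree H) {S : Finset F[X]}
    (hS : ∀ p, p ∈ S ↔ p.Monic ∧ Irreducible p ∧ p ∣ H) : ∏ p ∈ S, p = H := by
  classical
  have hS_eq : S = ⟨UniqueFactorizationMonoid.normalizedFactors H,
      (UniqueFactorizationMonoid.squarefree_iff_nodup_normalizedFactors hH.ne_zero).mp hsq⟩ := by
    ext p
    rw [hS, Finset.mem_mk, Polynomial.mem_normalizedFactors_iff hH.ne_zero]
    tauto
  rw [hS_eq, Finset.prod_mk]
  refine eq_of_monic_of_associated (monic_multiset_prod_of_monic _ _ fun p hp => ?_) hH ?_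
  · exact ((Polynomial.mem_normalizedFactors_iff hH.ne_zero).mp hp).2.1
  · simpa using UniqueFactorizationMonoid.prod_normalizedFactors hH.ne_zero

theorem Polynomial.eq_sum_of_isIdempotentElem_of_span_eq {F : Type*} [Field F] {m c : F[X]}
    {S : Finset F[X]} (hS : ∀ p ∈ S, p.Monic ∧ Irreducible p) (hm : m = (∏ p ∈ S, p) * c)
    {e : F[X] → F[X] ⧸ Ideal.span {m}}
    (he : ∀ p ∈ S, IsIdempotentElem (e p) ∧
      Ideal.span {e p} = Ideal.span {Ideal.Quotient.mk _ (m /ₘ p)})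
    {a : F[X] ⧸ Ideal.span {m}} (ha : IsIdempotentElem a)
    (ha_span : Ideal.span {a} = Ideal.span {Ideal.Quotient.mk _ c}) :
    a = ∑ p ∈ S, e p := by
  classical
  have hprod : m = (∏ p : S, p.1) * c := by rw [Finset.prod_coe_sort S (fun p => p), hm]
  have hc : Ideal.Quotient.mk (Ideal.span {m}) (c * ∏ p : S, p.1) = 0 := by
    rw [mul_comm c, ← hprod]
    exact Ideal.Quotient.mk_singleton_self m
  have hSe : ∀ p : S, Ideal.span {e p} =
      Ideal.span {Ideal.Quotient.mk (Ideal.span {m}) (c * ∏ q ∈ {p}ᶜ, q.1)} := by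
    intro p
    have hdiv : m /ₘ p.1 = c * ∏ q ∈ {p}ᶜ, q.1 := by
      rw [hprod, Fintype.prod_eq_mul_prod_compl p,
        show p.1 * (∏ q ∈ {p}ᶜ, q.1) * c = p.1 * (c * ∏ q ∈ {p}ᶜ, q.1) by ring,
        mul_divByMonic_cancel_left _ (hS p p.2).1]
    rw [(he p p.2).2, hdiv]
  have hortho : OrthogonalIdempotents fun p : S => e p :=
    .of_span_singleton_eq_mul_prod_compl _ hc (fun p => (he p p.2).1) hSe
  have hcop : Pairwise fun p q : S => IsCoprime p.1 q.1 := fun p q hpq =>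
    isCoprime_of_monic_of_irreducible (hS p p.2).1 (hS q q.2).1 (hS p p.2).2 (hS q q.2).2
      (Subtype.coe_ne_coe.mpr hpq)
  rw [← Finset.sum_coe_sort S e]
  refine ha.eq_of_span_singleton_eq hortho.isIdempotentElem_sum (ha_span.trans ?_)
  exact (Ideal.span_sum_eq_span_singleton_of_pairwise_isCoprime _ hortho hcop hc hSe).symm

open scoped Classical in
theorem stmt_6_general {F : Type*} [Field F] {n ℓ M : ℕ}
    (hchar : ((2 * n : ℕ) : F) ≠ 0)
    (hℓpos : 0 < ℓ) (hℓdvd : ℓ ∣ 2 * n) (hM : M = 2 * n / ℓ)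
    (h : F[X]) (hmonic : h.Monic) (hdvd : h ∣ X ^ M - 1)
    (φ : Rq F M →ₐ[F] Rq F (2 * n))
    (hφ : φ (mkq F M X) = mkq F (2 * n) (X ^ ℓ))
    (ehat : Rq F M) (hehat : ehat * ehat = ehat)
    (hgen : Ideal.span {ehat} = Ideal.span {mkq F M ((X ^ M - 1) /ₘ h)})
    (P : Finset F[X])
    (hP : ∀ p : F[X], p ∈ P ↔ p.Monic ∧ Irreducible p ∧ p ∣ X ^ (2 * n) - 1)
    (e : F[X] → Rq F (2 * n))
    (he : ∀ p ∈ P, e p * e p = e p ∧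
      Ideal.span {e p} = Ideal.span {mkq F (2 * n) ((X ^ (2 * n) - 1) /ₘ p)}) :
    φ ehat = ∑ p ∈ P.filter (fun p => p ∣ h.comp (X ^ ℓ)), e p := by
  obtain ⟨t, ht⟩ := hdvd
  set H := h.comp (X ^ ℓ)
  set c := t.comp (X ^ ℓ)
  have hm : X ^ (2 * n) - 1 = H * c := by
    rw [← mul_comp, ← ht, sub_comp, X_pow_comp, one_comp, ← pow_mul, hM,
      Nat.mul_div_cancel' hℓdvd]
  have hH : H.Monic := hmonic.comp (monic_X_pow ℓ) (by rw [natDegree_X_pow]; exact hℓpos.ne')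
  have hHsq : Squarefree H := by
    refine Squarefree.squarefree_of_dvd ⟨c, hm⟩ ?_
    simpa using (separable_X_pow_sub_C (1 : F) hchar one_ne_zero).squarefree
  have hS : ∀ p, p ∈ P.filter (· ∣ H) ↔ p.Monic ∧ Irreducible p ∧ p ∣ H := by
    intro p
    rw [Finset.mem_filter, hP]
    exact ⟨fun ⟨⟨hp, hirr, _⟩, hpH⟩ => ⟨hp, hirr, hpH⟩,
      fun ⟨hp, hirr, hpH⟩ => ⟨⟨hp, hirr, hpH.trans ⟨c, hm⟩⟩, hpH⟩⟩
  have hφ_span : Ideal.span {φ ehat} = Ideal.span {mkq F (2 * n) c} := by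
    have hdiv : (X ^ M - 1) /ₘ h = t := by rw [ht, mul_divByMonic_cancel_left _ hmonic]
    simpa only [Ideal.map_span, Set.image_singleton, hdiv, φ.apply_mk_eq_mk_comp hφ] using
      congrArg (Ideal.map φ) hgen
  exact eq_sum_of_isIdempotentElem_of_span_eq (fun p hp => ((hS p).mp hp).imp_right And.left)
    (by rw [hH.prod_eq_self_of_squarefree hHsq hS, hm])
    (fun p hp => he p (Finset.mem_filter.mp hp).1) (IsIdempotentElem.map hehat φ) hφ_span

open scoped Classical in
theorem stmt_6 {F : Type*} [Field F] {n ℓ M : ℕ} (hn : 1 ≤ n)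
    (hchar : ((2 * n : ℕ) : F) ≠ 0)
    (hℓpos : 0 < ℓ) (hℓdvd : ℓ ∣ 2 * n) (hM : M = 2 * n / ℓ)
    (h : F[X]) (hmonic : h.Monic) (hirr : Irreducible h) (hdvd : h ∣ X ^ M - 1)
    (φ : Rq F M →ₐ[F] Rq F (2 * n))
    (hφ : φ (mkq F M X) = mkq F (2 * n) (X ^ ℓ))
    (ehat : Rq F M) (hehat : ehat * ehat = ehat)
    (hgen : Ideal.span {ehat} = Ideal.span {mkq F M ((X ^ M - 1) /ₘ h)})
    (P : Finset F[X])
    (hP : ∀ p : F[X], p ∈ P ↔ p.Monic ∧ Irreducible p ∧ p ∣ X ^ (2 * n) - 1)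
    (e : F[X] → Rq F (2 * n))
    (he : ∀ p ∈ P, e p * e p = e p ∧
      Ideal.span {e p} = Ideal.span {mkq F (2 * n) ((X ^ (2 * n) - 1) /ₘ p)}) :
    φ ehat = ∑ p ∈ P.filter (fun p => p ∣ h.comp (X ^ ℓ)), e p :=
  stmt_6_general hchar hℓpos hℓdvd hM h hmonic hdvd φ hφ ehat hehat hgen P hP e he
end

section
/- Let h be a monic divisor of x^M − 1 in F[x] and let p be a monic irreducible divisor of x^{2n} − 1. Then p divides h(x^ℓ) if and only if the reciprocal polynomial p* divides h*(x^ℓ), where h* is the reciprocal polynomial of h. -/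
/-! Divisors of `X ^ m - 1` with `m > 0` have nonzero constant term, and on polynomials with
nonzero constant term reversal is multiplicative and involutive, so it preserves divisibility in
both directions. Reversal also commutes with the substitution `X ↦ X ^ ℓ`, because `revAt`
commutes with multiplication of indices by `ℓ`. -/

open Polynomial

/-- The reciprocal polynomial `p*(x) = p(0)⁻¹ · x^(deg p) · p(1/x)` of `p`. -/
noncomputable def recip {F : Type*} [Field F] (p : F[X]) : F[X] :=
  C (p.coeff 0)⁻¹ * p.reverse

namespace Polynomial

section CommSemiring

variable {R : Type*} [CommSemiring R]

theorem revAt_mul_mul (N n k : ℕ) : revAt (N * k) (n * k) = revAt N n * k := by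
  rcases Nat.eq_zero_or_pos k with rfl | hk
  · simp
  by_cases hn : n ≤ N
  · rw [revAt_le hn, revAt_le (Nat.mul_le_mul_right k hn), Nat.sub_mul]
  · have hlt : N * k < n * k := Nat.mul_lt_mul_of_pos_right (Nat.lt_of_not_le hn) hk
    rw [revAt_eq_self_of_lt (Nat.lt_of_not_le hn), revAt_eq_self_of_lt hlt]

theorem reflect_expand (N k : ℕ) (f : R[X]) :
    reflect (N * k) (expand R k f) = expand R k (reflect N f) := by
  induction f using Polynomial.induction_on' with
  | add f g hf hg => rw [map_add, reflect_add, hf, hg, reflect_add, map_add]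
  | monomial n c =>
    simp only [← C_mul_X_pow_eq_monomial, map_mul, expand_C, map_pow, expand_X, ← pow_mul',
      reflect_C_mul_X_pow, revAt_mul_mul]

theorem reverse_expand (k : ℕ) (f : R[X]) : (expand R k f).reverse = expand R k f.reverse := by
  rw [reverse, reverse, natDegree_expand, reflect_expand]

theorem reverse_reverse_of_coeff_zero_ne_zero {f : R[X]} (hf : f.coeff 0 ≠ 0) :
    f.reverse.reverse = f := by
  have hdeg : f.reverse.natDegree = f.natDegree := by
    rw [reverse_natDegree, natTrailingDegree_eq_zero.mpr (Or.inr hf), Nat.sub_zero]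
  rw [reverse, hdeg, reverse, reflect_reflect]

theorem dvd_iff_reverse_dvd_reverse [NoZeroDivisors R] {f g : R[X]} (hf : f.coeff 0 ≠ 0)
    (hg : g.coeff 0 ≠ 0) : f ∣ g ↔ f.reverse ∣ g.reverse := by
  constructor
  · rintro ⟨c, rfl⟩
    exact ⟨c.reverse, reverse_mul_of_domain f c⟩
  · rintro ⟨c, hc⟩
    refine ⟨c.reverse, ?_⟩
    rw [← reverse_reverse_of_coeff_zero_ne_zero hf, ← reverse_reverse_of_coeff_zero_ne_zero hg, hc,
      reverse_mul_of_domain]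

end CommSemiring

theorem coeff_zero_ne_zero_of_dvd_X_pow_sub_one {R : Type*} [Ring R] [Nontrivial R] {f : R[X]}
    {m : ℕ} (hm : 0 < m) (hf : f ∣ X ^ m - 1) : f.coeff 0 ≠ 0 := by
  obtain ⟨c, hc⟩ := hf
  intro hf0
  have h := congr_arg (coeff · 0) hc
  simp [coeff_X_pow, hm.ne, mul_coeff_zero, hf0] at h

end Polynomial

section Field

variable {F : Type*} [Field F]

theorem recip_expand {k : ℕ} (hk : 0 < k) (f : F[X]) :
    recip (expand F k f) = expand F k (recip f) := by
  rw [recip, recip, map_mul, expand_C, reverse_expand, ← coeff_expand_mul hk f 0, zero_mul]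

theorem dvd_iff_recip_dvd_recip {f g : F[X]} (hf : f.coeff 0 ≠ 0) (hg : g.coeff 0 ≠ 0) :
    f ∣ g ↔ recip f ∣ recip g := by
  have hunit : ∀ {a : F}, a ≠ 0 → IsUnit (C a⁻¹) := fun ha => isUnit_C.mpr (inv_ne_zero ha).isUnit
  rw [recip, recip, (hunit hf).mul_left_dvd, (hunit hg).dvd_mul_left,
    dvd_iff_reverse_dvd_reverse hf hg]

end Field

theorem stmt_8_general {F : Type*} [Field F] {n ℓ M : ℕ} (hn : 1 ≤ n)
    (hℓpos : 0 < ℓ) (hℓdvd : ℓ ∣ 2 * n) (hM : M = 2 * n / ℓ)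
    (h : F[X]) (hdvd : h ∣ X ^ M - 1)
    (p : F[X]) (hpdvd : p ∣ X ^ (2 * n) - 1) :
    p ∣ h.comp (X ^ ℓ) ↔ recip p ∣ (recip h).comp (X ^ ℓ) := by
  have hMpos : 0 < M := hM ▸ Nat.div_pos (Nat.le_of_dvd (by omega) hℓdvd) hℓpos
  have hh0 : h.coeff 0 ≠ 0 := coeff_zero_ne_zero_of_dvd_X_pow_sub_one hMpos hdvd
  have hp0 : p.coeff 0 ≠ 0 := coeff_zero_ne_zero_of_dvd_X_pow_sub_one (by omega) hpdvd
  have hexpand0 : (expand F ℓ h).coeff 0 ≠ 0 := by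
    rwa [← zero_mul ℓ, coeff_expand_mul hℓpos]
  rw [← expand_eq_comp_X_pow, ← expand_eq_comp_X_pow, ← recip_expand hℓpos,
    dvd_iff_recip_dvd_recip hp0 hexpand0]

theorem stmt_8 {F : Type*} [Field F] {n ℓ M : ℕ} (hn : 1 ≤ n)
    (hchar : ((2 * n : ℕ) : F) ≠ 0)
    (hℓpos : 0 < ℓ) (hℓdvd : ℓ ∣ 2 * n) (hM : M = 2 * n / ℓ)
    (h : F[X]) (hmonic : h.Monic) (hdvd : h ∣ X ^ M - 1)
    (p : F[X]) (hpmonic : p.Monic) (hpirr : Irreducible p)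
    (hpdvd : p ∣ X ^ (2 * n) - 1) :
    p ∣ h.comp (X ^ ℓ) ↔ recip p ∣ (recip h).comp (X ^ ℓ) :=
  stmt_8_general hn hℓpos hℓdvd hM h hdvd p hpdvd
end

section
/- Assume n is odd and that −1 is not a square in F, and let e' = (2n)^{−1}·∑_{i=0}^{2n−1} (−1)^i x^i ∈ F[Q_{4n}]. Then e' is a central idempotent of F[Q_{4n}] and the only left ideals of F[Q_{4n}] contained in F[Q_{4n}]·e' are 0 and F[Q_{4n}]·e' itself. -/
/-!
With `u = -x` we have `u ^ (2n) = 1` and `e' = (2n)⁻¹ • ∑ uⁱ`, the averaging idempotent of `u`: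
it absorbs `u` on both sides, so `x e' = e' x = -e'`. Conjugation by `y` sends `u` to `u⁻¹`, whose
geometric sum is the same, so `e'` also commutes with `y`, hence is central. Every `r e'` is then a
combination `a e' + b y e'`, and since `n` is odd, `y (y e') = xⁿ e' = -e'`. Thus `F[Q₄ₙ] e'` looks
like `F(√-1)`: `(a - b y)(a e' + b y e') = (a² + b²) e'`, and `a² + b² ≠ 0` because `-1` is not a
square in `F`, so every nonzero element of `F[Q₄ₙ] e'` generates it.
-/

open Finset MonoidAlgebra QuaternionGroup

section Monoid

variable {M : Type*} [Monoid M] {a s : M}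

theorem pow_mul_eq_self_of_mul_eq_self (h : a * s = s) (k : ℕ) : a ^ k * s = s := by
  induction k with
  | zero => rw [pow_zero, one_mul]
  | succ k ih => rw [pow_succ, mul_assoc, h, ih]

theorem mul_pow_eq_self_of_mul_eq_self (h : s * a = s) (k : ℕ) : s * a ^ k = s := by
  induction k with
  | zero => rw [pow_zero, mul_one]
  | succ k ih => rw [pow_succ', ← mul_assoc, h, ih]

end Monoid

theorem pow_mul_eq_neg_one_pow_smul_of_mul_eq_neg {R A : Type*} [Ring R] [Ring A] [Module R A]
    {x e : A} (h : x * e = -e) (k : ℕ) : x ^ k * e = (-1 : R) ^ k • e := by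
  induction k with
  | zero => rw [pow_zero, pow_zero, one_mul, one_smul]
  | succ k ih => rw [pow_succ, mul_assoc, h, mul_neg, ih, pow_succ, mul_neg_one, neg_smul]

section GeomSum

variable {A : Type*} [Ring A] {u : A} {m : ℕ}

theorem mul_geom_sum_of_pow_eq_one (hu : u ^ m = 1) :
    u * ∑ i ∈ range m, u ^ i = ∑ i ∈ range m, u ^ i := by
  have h := mul_geom_sum u m
  rwa [hu, sub_self, sub_mul, one_mul, sub_eq_zero] at h

theorem geom_sum_mul_of_pow_eq_one (hu : u ^ m = 1) :
    (∑ i ∈ range m, u ^ i) * u = ∑ i ∈ range m, u ^ i := by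
  have h := geom_sum_mul u m
  rwa [hu, sub_self, mul_sub, mul_one, sub_eq_zero] at h

variable {F : Type*} [Field F] [Algebra F A]

theorem sum_neg_one_pow_smul_pow (x : A) (m : ℕ) :
    ∑ i ∈ range m, (-1 : F) ^ i • x ^ i = ∑ i ∈ range m, (-x) ^ i := by
  refine sum_congr rfl fun i _ => ?_
  rw [Algebra.smul_def, map_pow, map_neg, map_one, neg_pow x]

theorem isIdempotentElem_smul_geom_sum (hm : (m : F) ≠ 0) (hu : u ^ m = 1) :
    IsIdempotentElem ((m : F)⁻¹ • ∑ i ∈ range m, u ^ i) := by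
  have hS : (∑ i ∈ range m, u ^ i) * ∑ i ∈ range m, u ^ i = (m : F) • ∑ i ∈ range m, u ^ i := by
    rw [sum_mul, sum_congr rfl fun i _ =>
        pow_mul_eq_self_of_mul_eq_self (mul_geom_sum_of_pow_eq_one hu) i,
      sum_const, card_range, Nat.cast_smul_eq_nsmul]
  rw [IsIdempotentElem, smul_mul_smul_comm, hS, smul_smul, mul_assoc, inv_mul_cancel₀ hm, mul_one]

/-- Both sums are `m` times the product `(∑ wⁱ) * (∑ uⁱ)`, since `w * u = 1` lets each factor
absorb the powers of the other. -/
theorem geom_sum_eq_of_mul_eq_one (hm : (m : F) ≠ 0) {w : A} (hu : u ^ m = 1) (hw : w ^ m = 1)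
    (hwu : w * u = 1) : ∑ i ∈ range m, w ^ i = ∑ i ∈ range m, u ^ i := by
  set S := ∑ i ∈ range m, u ^ i
  set T := ∑ i ∈ range m, w ^ i
  have hwS : w * S = S := calc
    w * S = (w * u) * S := by rw [mul_assoc, mul_geom_sum_of_pow_eq_one hu]
    _ = S := by rw [hwu, one_mul]
  have hTu : T * u = T := calc
    T * u = T * (w * u) := by rw [← mul_assoc, geom_sum_mul_of_pow_eq_one hw]
    _ = T := by rw [hwu, mul_one]
  have hTS : (m : F) • T = (m : F) • S := by
    calc (m : F) • T = T * S := by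
          rw [mul_sum, sum_congr rfl fun i _ => mul_pow_eq_self_of_mul_eq_self hTu i, sum_const,
            card_range, Nat.cast_smul_eq_nsmul]
      _ = (m : F) • S := by
          rw [sum_mul, sum_congr rfl fun i _ => pow_mul_eq_self_of_mul_eq_self hwS i, sum_const,
            card_range, Nat.cast_smul_eq_nsmul]
  exact smul_right_injective A hm hTS

end GeomSum

theorem Ideal.eq_bot_or_eq_span_singleton_of_mem_span {R : Type*} [Semiring R] {e : R}
    (h : ∀ z ∈ Ideal.span {e}, z ≠ 0 → e ∈ Ideal.span {z}) {C : Ideal R}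
    (hC : C ≤ Ideal.span {e}) : C = ⊥ ∨ C = Ideal.span {e} := by
  refine or_iff_not_imp_left.mpr fun hC0 => le_antisymm hC ?_
  obtain ⟨z, hzC, hz0⟩ := Submodule.ne_bot_iff C |>.mp hC0
  rw [Ideal.span_singleton_le_iff_mem]
  exact (Ideal.span_singleton_le_iff_mem C).mpr hzC (h z (hC hzC) hz0)

theorem sq_add_sq_ne_zero_of_forall_sq_ne_neg_one {F : Type*} [Field F]
    (hF : ∀ u : F, u ^ 2 ≠ -1) {a b : F} (h : a ≠ 0 ∨ b ≠ 0) : a ^ 2 + b ^ 2 ≠ 0 := by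
  intro hab
  rcases eq_or_ne b 0 with rfl | hb
  · simp_all
  · apply hF (a / b)
    rw [div_pow, div_eq_iff (pow_ne_zero 2 hb)]
    linear_combination hab

theorem exists_mul_eq_of_mem_span_pair {F A : Type*} [Field F] [Ring A] [Algebra F A]
    (hF : ∀ u : F, u ^ 2 ≠ -1) {e j z : A} (hj : j * (j * e) = -e)
    (hz : z ∈ Submodule.span F {e, j * e}) (hz0 : z ≠ 0) : ∃ r : A, r * z = e := by
  obtain ⟨a, b, rfl⟩ := Submodule.mem_span_pair.mp hz
  have hab : a ≠ 0 ∨ b ≠ 0 := by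
    contrapose! hz0
    rw [hz0.1, hz0.2, zero_smul, zero_smul, add_zero]
  have key : (a • (1 : A) - b • j) * (a • e + b • (j * e)) = (a ^ 2 + b ^ 2) • e := by
    simp only [sub_mul, mul_add, smul_mul_assoc, mul_smul_comm, one_mul, hj, smul_neg]
    module
  refine ⟨(a ^ 2 + b ^ 2)⁻¹ • (a • (1 : A) - b • j), ?_⟩
  rw [smul_mul_assoc, key, smul_smul,
    inv_mul_cancel₀ (sq_add_sq_ne_zero_of_forall_sq_ne_neg_one hF hab), one_smul]

namespace QuaternionGroup

variable {F : Type*} [Field F] {n : ℕ}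

local notation "𝐱" => MonoidAlgebra.of F (QuaternionGroup n) (QuaternionGroup.a 1)
local notation "𝐲" => MonoidAlgebra.of F (QuaternionGroup n) (QuaternionGroup.xa 0)

theorem of_a_eq_x_pow [NeZero n] (i : ZMod (2 * n)) :
    of F (QuaternionGroup n) (a i) = 𝐱 ^ i.val := by
  rw [← map_pow, a_one_pow, ZMod.natCast_zmod_val]

theorem of_xa_eq_y_mul (i : ZMod (2 * n)) :
    of F (QuaternionGroup n) (xa i) = 𝐲 * of F _ (a i) := by
  rw [← map_mul, xa_mul_a, zero_add]

theorem x_pow_two_mul : 𝐱 ^ (2 * n) = 1 := by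
  rw [← map_pow, a_one_pow_n, map_one]

theorem neg_x_pow_two_mul : (-𝐱) ^ (2 * n) = 1 := by
  rw [(even_two_mul n).neg_pow, x_pow_two_mul]

theorem x_mul_geom_sum_neg_x :
    𝐱 * ∑ i ∈ range (2 * n), (-𝐱) ^ i = -∑ i ∈ range (2 * n), (-𝐱) ^ i := by
  rw [← neg_eq_iff_eq_neg, ← neg_mul, mul_geom_sum_of_pow_eq_one neg_x_pow_two_mul]

theorem geom_sum_neg_x_mul_x :
    (∑ i ∈ range (2 * n), (-𝐱) ^ i) * 𝐱 = -∑ i ∈ range (2 * n), (-𝐱) ^ i := by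
  rw [← neg_eq_iff_eq_neg, ← mul_neg, geom_sum_mul_of_pow_eq_one neg_x_pow_two_mul]

theorem y_mul_self : 𝐲 * 𝐲 = 𝐱 ^ n := by
  rw [← map_mul, xa_mul_xa, ← map_pow, a_one_pow, add_zero, sub_zero]

theorem y_mul_x [NeZero n] : 𝐲 * 𝐱 = 𝐱 ^ (2 * n - 1) * 𝐲 := by
  have h : ((2 * n - 1 : ℕ) : ZMod (2 * n)) = -1 := by
    rw [Nat.cast_sub (Nat.one_le_iff_ne_zero.mpr (NeZero.ne _)), ZMod.natCast_self, Nat.cast_one,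
      zero_sub]
  rw [← map_pow, ← map_mul, ← map_mul, a_one_pow, xa_mul_a, a_mul_xa, h, zero_add, zero_sub,
    neg_neg]

/-- `y` conjugates `-x` to its inverse `(-x)^(2n-1)`, which has the same geometric sum. -/
theorem commute_y_geom_sum_neg_x [NeZero n] (hm : ((2 * n : ℕ) : F) ≠ 0) :
    Commute 𝐲 (∑ i ∈ range (2 * n), (-𝐱) ^ i) := by
  have hu : (-𝐱) ^ (2 * n) = 1 := neg_x_pow_two_mul
  have hodd : Odd (2 * n - 1) :=
    Nat.Even.sub_odd (Nat.one_le_iff_ne_zero.mpr (NeZero.ne _)) (even_two_mul n) odd_one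
  have hsemi : SemiconjBy 𝐲 (-𝐱) ((-𝐱) ^ (2 * n - 1)) := by
    rw [SemiconjBy, hodd.neg_pow, mul_neg, neg_mul, y_mul_x]
  have hw : ((-𝐱) ^ (2 * n - 1)) ^ (2 * n) = 1 := by rw [pow_right_comm, hu, one_pow]
  have hwu : (-𝐱) ^ (2 * n - 1) * -𝐱 = 1 := by
    rw [pow_sub_one_mul (NeZero.ne _), hu]
  calc 𝐲 * ∑ i ∈ range (2 * n), (-𝐱) ^ i
      = (∑ i ∈ range (2 * n), ((-𝐱) ^ (2 * n - 1)) ^ i) * 𝐲 := by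
        rw [mul_sum, sum_mul]
        exact sum_congr rfl fun i _ => (hsemi.pow_right i).eq
    _ = (∑ i ∈ range (2 * n), (-𝐱) ^ i) * 𝐲 := by rw [geom_sum_eq_of_mul_eq_one hm hu hw hwu]

theorem commute_of_commute_x_of_commute_y [NeZero n] {z : MonoidAlgebra F (QuaternionGroup n)}
    (hx : Commute z 𝐱) (hy : Commute z 𝐲) (r : MonoidAlgebra F (QuaternionGroup n)) :
    Commute z r := by
  induction r using MonoidAlgebra.induction_on with
  | of g =>
    rcases g with i | i
    · rw [of_a_eq_x_pow]; exact hx.pow_right _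
    · rw [of_xa_eq_y_mul, of_a_eq_x_pow]; exact hy.mul_right (hx.pow_right _)
  | add f g hf hg => exact hf.add_right hg
  | smul r f hf => exact hf.smul_right r

theorem mul_mem_span_e_y_mul [NeZero n] {e : MonoidAlgebra F (QuaternionGroup n)}
    (hx : 𝐱 * e = -e) (r : MonoidAlgebra F (QuaternionGroup n)) :
    r * e ∈ Submodule.span F {e, 𝐲 * e} := by
  induction r using MonoidAlgebra.induction_on with
  | of g =>
    rcases g with i | i
    · rw [of_a_eq_x_pow, pow_mul_eq_neg_one_pow_smul_of_mul_eq_neg (R := F) hx]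
      exact Submodule.smul_mem _ _ (Submodule.subset_span (by simp))
    · rw [of_xa_eq_y_mul i, of_a_eq_x_pow i, mul_assoc,
        pow_mul_eq_neg_one_pow_smul_of_mul_eq_neg (R := F) hx, mul_smul_comm]
      exact Submodule.smul_mem _ _ (Submodule.subset_span (by simp))
  | add f g hf hg => rw [add_mul]; exact Submodule.add_mem _ hf hg
  | smul r f hf => rw [smul_mul_assoc]; exact Submodule.smul_mem _ r hf

end QuaternionGroup

theorem stmt_15_general {F : Type*} [Field F] {n : ℕ} (hno : Odd n)
    (hchar : ((4 * n : ℕ) : F) ≠ 0)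
    (hu : ∀ u : F, u ^ 2 ≠ -1)
    (x e' : MonoidAlgebra F (QuaternionGroup n))
    (hx : x = MonoidAlgebra.of F (QuaternionGroup n) (QuaternionGroup.a 1))
    (he' : e' = ((2 * n : ℕ) : F)⁻¹ •
      ∑ i ∈ Finset.range (2 * n), ((-1 : F) ^ i) • x ^ i) :
    e' * e' = e' ∧ (∀ z, e' * z = z * e') ∧
    ∀ C : Ideal (MonoidAlgebra F (QuaternionGroup n)), C ≤ Ideal.span {e'} →
      C = ⊥ ∨ C = Ideal.span {e'} := by
  have : NeZero n := ⟨hno.pos.ne'⟩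
  have hm : ((2 * n : ℕ) : F) ≠ 0 := by
    contrapose! hchar
    rw [show 4 * n = 2 * (2 * n) by ring, Nat.cast_mul, hchar, mul_zero]
  subst hx
  rw [sum_neg_one_pow_smul_pow] at he'
  have hxe : of F _ (a 1) * e' = -e' := by
    rw [he', mul_smul_comm, x_mul_geom_sum_neg_x, smul_neg]
  have hex : e' * of F _ (a 1) = -e' := by
    rw [he', smul_mul_assoc, geom_sum_neg_x_mul_x, smul_neg]
  have hye : Commute e' (of F _ (xa 0)) := by
    rw [he']
    exact (commute_y_geom_sum_neg_x hm).symm.smul_left _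
  have hyye : of F _ (xa 0) * (of F _ (xa 0) * e') = -e' := by
    rw [← mul_assoc, y_mul_self, pow_mul_eq_neg_one_pow_smul_of_mul_eq_neg (R := F) hxe,
      hno.neg_one_pow, neg_one_smul]
  refine ⟨he' ▸ isIdempotentElem_smul_geom_sum hm neg_x_pow_two_mul,
    fun z => commute_of_commute_x_of_commute_y (hex.trans hxe.symm) hye z, fun C hC => ?_⟩
  refine Ideal.eq_bot_or_eq_span_singleton_of_mem_span (fun z hz hz0 => ?_) hC
  obtain ⟨r, rfl⟩ := Ideal.mem_span_singleton'.mp hz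
  obtain ⟨s, hs⟩ := exists_mul_eq_of_mem_span_pair hu hyye (mul_mem_span_e_y_mul hxe r) hz0
  exact Ideal.mem_span_singleton'.mpr ⟨s, hs⟩

theorem stmt_15 {F : Type*} [Field F] {n : ℕ} (hn : 1 ≤ n) (hno : Odd n)
    (hchar : ((4 * n : ℕ) : F) ≠ 0)
    (hu : ∀ u : F, u ^ 2 ≠ -1)
    (x y e' : MonoidAlgebra F (QuaternionGroup n))
    (hx : x = MonoidAlgebra.of F (QuaternionGroup n) (QuaternionGroup.a 1))
    (hy : y = MonoidAlgebra.of F (QuaternionGroup n) (QuaternionGroup.xa 0))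
    (he' : e' = ((2 * n : ℕ) : F)⁻¹ •
      ∑ i ∈ Finset.range (2 * n), ((-1 : F) ^ i) • x ^ i) :
    e' * e' = e' ∧ (∀ z, e' * z = z * e') ∧
    ∀ C : Ideal (MonoidAlgebra F (QuaternionGroup n)), C ≤ Ideal.span {e'} →
      C = ⊥ ∨ C = Ideal.span {e'} :=
  stmt_15_general hno hchar hu x e' hx he'
end

section
/- Let f be a monic irreducible divisor of x^{2n} − 1 in F[x] with f ≠ f*. Then f* is also a monic irreducible divisor of x^{2n} − 1, and if e_f and e_{f*} are idempotents of F[x]/(x^{2n} − 1) generating the ideals generated by the images of (x^{2n} − 1)/f and (x^{2n} − 1)/f* respectively, and π : F[x]/(x^{2n} − 1) → F[Q_{4n}] is the F-algebra homomorphism sending the class of x to the group element x, then π(e_f) + π(e_{f*}) is a central idempotent of F[Q_{4n}] and dim_F (F[Q_{4n}]·(π(e_f) + π(e_{f*}))) = 4·deg f. -/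
/-!
Since `f` and `f*` are distinct monic irreducibles, they are coprime, so `x^{2n} - 1` divides
the product of the cofactors `g = (x^{2n} - 1)/f` and `g* = (x^{2n} - 1)/f*`: the idempotents
are orthogonal, and `e + e*` is an idempotent generating an ideal of dimension `deg f + deg f*`.
The automorphism `x ↦ x⁻¹` of `R = F[x]/(x^{2n} - 1)` maps `q` to `x^{-deg q} q(0) q*`, an
associate of `q*`, so it swaps `e` and `e*`. Conjugation by `y` acts on the image of `π` as this
automorphism, hence `π(e + e*)` commutes with `y` and with the image of `π`, which together
generate `F[Q₄ₙ]`. Finally `F[Q₄ₙ] = π(R) ⊕ π(R) y`, which doubles the dimension of the ideal.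
-/

open Polynomial

open Module QuaternionGroup

section Algebra

theorem SemiconjBy.aeval {R A : Type*} [CommSemiring R] [Semiring A] [Algebra R A] {y u v : A}
    (h : SemiconjBy y u v) (p : R[X]) : SemiconjBy y (aeval u p) (aeval v p) := by
  induction p using Polynomial.induction_on with
  | C c =>
    simp only [aeval_C]
    exact (Algebra.commutes c y).symm
  | add p q hp hq => simpa only [map_add] using hp.add_right hq
  | monomial k c ih =>
    simpa only [pow_succ, ← mul_assoc, map_mul, aeval_X] using ih.mul_right h

theorem Submodule.finrank_prod_eq {K V W : Type*} [DivisionRing K] [AddCommGroup V] [Module K V]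
    [AddCommGroup W] [Module K W] (p : Submodule K V) (q : Submodule K W)
    [FiniteDimensional K p] [FiniteDimensional K q] :
    finrank K (p.prod q) = finrank K p + finrank K q := by
  have : p.prod q = LinearMap.range (p.subtype.prodMap q.subtype) := by
    rw [LinearMap.range_prodMap, Submodule.range_subtype, Submodule.range_subtype]
  rw [this, LinearMap.finrank_range_of_inj (p.injective_subtype.prodMap q.injective_subtype),
    Module.finrank_prod]

variable {R : Type*} [CommRing R] {e e' : R}

theorem IsIdempotentElem.eq_of_span_singleton_eq_s17 (he : IsIdempotentElem e)
    (he' : IsIdempotentElem e') (h : Ideal.span {e} = Ideal.span {e'}) : e = e' := by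
  obtain ⟨r, hr⟩ := Ideal.mem_span_singleton.1 (h ▸ Ideal.mem_span_singleton_self e)
  obtain ⟨s, hs⟩ := Ideal.mem_span_singleton.1 (h ▸ Ideal.mem_span_singleton_self e')
  calc e = e' * e := by rw [hr, ← mul_assoc, he'.eq]
    _ = e * e' := mul_comm _ _
    _ = e' := by rw [hs, ← mul_assoc, he.eq]

theorem Ideal.span_singleton_add_eq_sup_of_mul_eq_zero (he : IsIdempotentElem e)
    (he' : IsIdempotentElem e') (h : e * e' = 0) :
    Ideal.span {e + e'} = Ideal.span {e} ⊔ Ideal.span {e'} := by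
  refine le_antisymm (Ideal.span_le.2 (Set.singleton_subset_iff.2 (Submodule.add_mem_sup
    (Ideal.mem_span_singleton_self e) (Ideal.mem_span_singleton_self e')))) (sup_le ?_ ?_)
  · exact Ideal.span_singleton_le_span_singleton.2
      ⟨e, by rw [add_mul, he.eq, mul_comm, h, add_zero]⟩
  · exact Ideal.span_singleton_le_span_singleton.2 ⟨e', by rw [add_mul, he'.eq, h, zero_add]⟩

theorem Ideal.span_singleton_inf_eq_bot_of_mul_eq_zero (he : IsIdempotentElem e) (h : e * e' = 0) :
    Ideal.span {e} ⊓ Ideal.span {e'} = ⊥ := by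
  refine eq_bot_iff.2 fun x hx => ?_
  obtain ⟨r, rfl⟩ := Ideal.mem_span_singleton.1 (Ideal.mem_inf.1 hx).1
  obtain ⟨s, hs⟩ := Ideal.mem_span_singleton.1 (Ideal.mem_inf.1 hx).2
  rw [Ideal.mem_bot, ← he.eq, mul_assoc, hs, ← mul_assoc, h, zero_mul]

theorem finrank_span_add_of_mul_eq_zero {K : Type*} [Field K] [Algebra K R]
    [FiniteDimensional K R] (he : IsIdempotentElem e) (he' : IsIdempotentElem e')
    (h : e * e' = 0) :
    finrank K ((Ideal.span {e + e'}).restrictScalars K) =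
      finrank K ((Ideal.span {e}).restrictScalars K) +
        finrank K ((Ideal.span {e'}).restrictScalars K) := by
  rw [← Submodule.finrank_sup_add_finrank_inf_eq, ← Submodule.restrictScalars_sup,
    ← Submodule.restrictScalars_inf, Ideal.span_singleton_add_eq_sup_of_mul_eq_zero he he' h,
    Ideal.span_singleton_inf_eq_bot_of_mul_eq_zero he h, Submodule.restrictScalars_bot,
    finrank_bot, add_zero]

end Algebra

section Recip

variable {F : Type*} [Field F]

theorem recip_mul (p q : F[X]) : recip (p * q) = recip p * recip q := by
  simp only [recip, mul_coeff_zero, mul_inv, reverse_mul_of_domain, C_mul]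
  ring

theorem coeff_zero_recip {p : F[X]} (hp : p.Monic) : (recip p).coeff 0 = (p.coeff 0)⁻¹ := by
  rw [recip, coeff_C_mul, coeff_zero_reverse, hp.leadingCoeff, mul_one]

theorem natDegree_recip {p : F[X]} (h0 : p.coeff 0 ≠ 0) :
    (recip p).natDegree = p.natDegree := by
  rw [recip, natDegree_C_mul (inv_ne_zero h0), reverse_natDegree,
    natTrailingDegree_eq_zero_of_constantCoeff_ne_zero h0, Nat.sub_zero]

theorem monic_recip {p : F[X]} (h0 : p.coeff 0 ≠ 0) : (recip p).Monic := by
  rw [Monic, recip, leadingCoeff_mul, leadingCoeff_C, reverse_leadingCoeff, trailingCoeff,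
    natTrailingDegree_eq_zero_of_constantCoeff_ne_zero h0, inv_mul_cancel₀ h0]

theorem recip_recip {p : F[X]} (hp : p.Monic) (h0 : p.coeff 0 ≠ 0) : recip (recip p) = p := by
  have hrev : p.reverse.reverse = p := by
    ext k
    rw [coeff_reverse, coeff_reverse, reverse_natDegree,
      natTrailingDegree_eq_zero_of_constantCoeff_ne_zero h0, Nat.sub_zero, revAt_invol]
  rw [recip, coeff_zero_recip hp, inv_inv, recip, reverse, natDegree_C_mul (inv_ne_zero h0),
    reflect_C_mul, ← reverse, hrev, ← mul_assoc, ← C_mul, mul_inv_cancel₀ h0, C_1, one_mul]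

theorem isUnit_of_isUnit_recip {p : F[X]} (h0 : p.coeff 0 ≠ 0) (hu : IsUnit (recip p)) :
    IsUnit p := by
  have hd : p.natDegree = 0 := by rw [← natDegree_recip h0]; exact natDegree_eq_zero_of_isUnit hu
  obtain ⟨c, rfl⟩ := natDegree_eq_zero.1 hd
  exact isUnit_C.2 (by simpa using h0)

theorem irreducible_recip {p : F[X]} (hp : p.Monic) (h0 : p.coeff 0 ≠ 0)
    (hirr : Irreducible p) : Irreducible (recip p) := by
  refine ⟨fun hu => hirr.not_isUnit (isUnit_of_isUnit_recip h0 hu), fun a b hab => ?_⟩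
  have hab0 : a.coeff 0 * b.coeff 0 ≠ 0 := by
    rw [← mul_coeff_zero, ← hab, coeff_zero_recip hp]
    exact inv_ne_zero h0
  have hp' : p = recip a * recip b := by rw [← recip_mul, ← hab, recip_recip hp h0]
  exact (hirr.isUnit_or_isUnit hp').imp (isUnit_of_isUnit_recip (left_ne_zero_of_mul hab0))
    (isUnit_of_isUnit_recip (right_ne_zero_of_mul hab0))

theorem coeff_zero_X_pow_sub_one {N : ℕ} (hN : N ≠ 0) : (X ^ N - 1 : F[X]).coeff 0 = -1 := by
  simp [coeff_X_pow, hN.symm]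

theorem recip_X_pow_sub_one {N : ℕ} (hN : N ≠ 0) : recip (X ^ N - 1 : F[X]) = X ^ N - 1 := by
  have hrev : (X ^ N - 1 : F[X]).reverse = 1 - X ^ N := by
    rw [reverse, ← C_1, natDegree_X_pow_sub_C, C_1, reflect_sub, reflect_monomial, reflect_one,
      revAt_le le_rfl, Nat.sub_self, pow_zero]
  rw [recip, coeff_zero_X_pow_sub_one hN, hrev]
  simp

theorem coeff_zero_ne_zero_of_dvd_X_pow_sub_one {N : ℕ} (hN : N ≠ 0) {p : F[X]}
    (hp : p ∣ X ^ N - 1) : p.coeff 0 ≠ 0 := by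
  intro h
  obtain ⟨q, hq⟩ := hp
  have := congrArg (coeff · 0) hq
  simp [mul_coeff_zero, h, coeff_zero_X_pow_sub_one hN] at this

theorem X_pow_sub_one_dvd_mul_recip {N : ℕ} (hN : N ≠ 0) {f g : F[X]} (hf : f.Monic)
    (hirr : Irreducible f) (hne : f ≠ recip f) (hfg : X ^ N - 1 = f * g) :
    X ^ N - 1 ∣ g * recip g := by
  have h0 := coeff_zero_ne_zero_of_dvd_X_pow_sub_one hN ⟨g, hfg⟩
  have hfg' : X ^ N - 1 = recip f * recip g := by
    rw [← recip_mul, ← hfg, recip_X_pow_sub_one hN]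
  have hndvd : ¬f ∣ recip f := fun h =>
    hne (eq_of_monic_of_dvd_of_natDegree_le hf (monic_recip h0) h (natDegree_recip h0).le).symm
  have hmul := (hirr.coprime_iff_not_dvd.2 hndvd).mul_dvd ⟨g, hfg⟩ ⟨recip g, hfg'⟩
  rw [hfg] at hmul
  rw [hfg']
  exact mul_dvd_mul_right ((mul_dvd_mul_iff_left hf.ne_zero).1 hmul) _

end Recip

section CyclicAlgebra

variable {F : Type*} [Field F] {N : ℕ}

theorem X_pow_sub_one_ne_zero (hN : N ≠ 0) : (X ^ N - 1 : F[X]) ≠ 0 := by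
  simpa using X_pow_sub_C_ne_zero (Nat.pos_of_ne_zero hN) (1 : F)

theorem finrank_Rq : finrank F (Rq F N) = N := by
  rw [finrank_quotient_span_eq_natDegree, ← C_1, natDegree_X_pow_sub_C]

instance [NeZero N] : FiniteDimensional F (Rq F N) :=
  Module.finite_of_finrank_pos (by rw [finrank_Rq]; exact Nat.pos_of_ne_zero (NeZero.ne N))

theorem mkq_eq_zero_iff {p : F[X]} : mkq F N p = 0 ↔ X ^ N - 1 ∣ p :=
  Ideal.Quotient.eq_zero_iff_mem.trans Ideal.mem_span_singleton

theorem finrank_span_mkq_of_eq_mul (hN : N ≠ 0) {f g : F[X]} (hfg : X ^ N - 1 = f * g) :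
    finrank F ((Ideal.span {mkq F N g}).restrictScalars F) = f.natDegree := by
  -- `p ↦ p g` induces `F[x]/(f) ≃ₗ[F] (g)`, since `f g ∣ p g ↔ f ∣ p`
  have hg : g ≠ 0 := by
    rintro rfl
    exact X_pow_sub_one_ne_zero hN (by rw [hfg, mul_zero])
  let φ : F[X] →ₗ[F] Rq F N :=
    (Ideal.Quotient.mkₐ F (Ideal.span {X ^ N - 1})).toLinearMap ∘ₗ LinearMap.mulRight F g
  have hrange : LinearMap.range φ = (Ideal.span {mkq F N g}).restrictScalars F := by
    ext x
    obtain ⟨x, rfl⟩ := Ideal.Quotient.mk_surjective x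
    simp only [φ, LinearMap.mem_range, LinearMap.coe_comp, Function.comp_apply,
      LinearMap.mulRight_apply, AlgHom.toLinearMap_apply, Ideal.Quotient.mkₐ_eq_mk, map_mul,
      Submodule.restrictScalars_mem, Ideal.mem_span_singleton']
    exact (Ideal.Quotient.mk_surjective.exists (p := fun a => a * mkq F N g = mkq F N x)).symm
  have hker : LinearMap.ker φ = (Ideal.span {f}).restrictScalars F := by
    ext p
    simp only [φ, LinearMap.mem_ker, LinearMap.coe_comp, Function.comp_apply,
      LinearMap.mulRight_apply, AlgHom.toLinearMap_apply, Ideal.Quotient.mkₐ_eq_mk,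
      Submodule.restrictScalars_mem, Ideal.mem_span_singleton]
    rw [mkq_eq_zero_iff, hfg, mul_dvd_mul_iff_right hg]
  rw [← hrange, ← φ.quotKerEquivRange.finrank_eq, hker,
    (Submodule.Quotient.restrictScalarsEquiv F _).finrank_eq, finrank_quotient_span_eq_natDegree]

theorem aeval_mkq_X (p : F[X]) : aeval (mkq F N X) p = mkq F N p :=
  AdjoinRoot.aeval_eq p

theorem mkq_X_pow_self : mkq F N X ^ N = 1 := by
  rw [← sub_eq_zero, ← map_pow, ← map_one (mkq F N), ← map_sub, mkq_eq_zero_iff]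

theorem mkq_X_mul_pow_pred (hN : N ≠ 0) : mkq F N X * mkq F N X ^ (N - 1) = 1 := by
  rw [← pow_succ', Nat.sub_add_cancel (Nat.one_le_iff_ne_zero.2 hN), mkq_X_pow_self]

theorem mul_eq_zero_of_mem_span_mkq {g g' : F[X]} (h : X ^ N - 1 ∣ g * g') {x y : Rq F N}
    (hx : x ∈ Ideal.span {mkq F N g}) (hy : y ∈ Ideal.span {mkq F N g'}) : x * y = 0 := by
  obtain ⟨r, rfl⟩ := Ideal.mem_span_singleton'.1 hx
  obtain ⟨s, rfl⟩ := Ideal.mem_span_singleton'.1 hy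
  rw [mul_mul_mul_comm, ← map_mul, mkq_eq_zero_iff.2 h, mul_zero]

variable (F N) in
noncomputable def invX : Rq F N →ₐ[F] Rq F N :=
  Ideal.Quotient.liftₐ _ (aeval (mkq F N X ^ (N - 1))) fun p hp => by
    obtain ⟨q, rfl⟩ := Ideal.mem_span_singleton.mp hp
    rw [map_mul, map_sub, map_pow, map_one, aeval_X, ← pow_mul, mul_comm (N - 1), pow_mul,
      mkq_X_pow_self, one_pow, sub_self, zero_mul]

theorem invX_mkq (p : F[X]) : invX F N (mkq F N p) = aeval (mkq F N X ^ (N - 1)) p :=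
  Ideal.Quotient.liftₐ_apply _ _ _ _

theorem span_invX_mkq (hN : N ≠ 0) {q : F[X]} (h0 : q.coeff 0 ≠ 0) :
    Ideal.span {invX F N (mkq F N q)} = Ideal.span {mkq F N (recip q)} := by
  -- `x` is a unit with inverse `x^(N-1)`, and `q(x⁻¹) x^(deg q) = q.reverse(x)`
  set t := mkq F N X
  let _ : Invertible (t ^ (N - 1)) :=
    invertibleOfRightInverse _ t (by rw [mul_comm, mkq_X_mul_pow_pred hN])
  have hrev := eval₂_reverse_mul_pow (algebraMap F (Rq F N)) (t ^ (N - 1)) q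
  rw [← aeval_def, ← aeval_def, ← invX_mkq, invOf_eq_left_inv (mkq_X_mul_pow_pred hN),
    aeval_mkq_X] at hrev
  have hrecip : mkq F N q.reverse = mkq F N (C (q.coeff 0)) * mkq F N (recip q) := by
    rw [← map_mul, recip, ← mul_assoc, ← C_mul, mul_inv_cancel₀ h0, C_1, one_mul]
  rw [← hrev, hrecip, mul_comm, ← mul_assoc, Ideal.span_singleton_mul_left_unit]
  exact ((isUnit_of_invertible _).pow _).mul ((isUnit_C.2 h0.isUnit).map _)

theorem invX_eq_of_span_eq (hN : N ≠ 0) {q : F[X]} (h0 : q.coeff 0 ≠ 0) {e e' : Rq F N}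
    (he : IsIdempotentElem e) (he' : IsIdempotentElem e')
    (hq : Ideal.span {e} = Ideal.span {mkq F N q})
    (hq' : Ideal.span {e'} = Ideal.span {mkq F N (recip q)}) : invX F N e = e' := by
  have hmap (x : Rq F N) : Ideal.span {invX F N x} = (Ideal.span {x}).map (invX F N) := by
    rw [Ideal.map_span, Set.image_singleton]
  refine IsIdempotentElem.eq_of_span_singleton_eq_s17 (he.map (invX F N)) he' ?_
  rw [hq', ← span_invX_mkq hN h0, hmap, hq, ← hmap]

end CyclicAlgebra

section GroupAlgebra

variable {F : Type*} [Field F] {n : ℕ}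
  {π : Rq F (2 * n) →ₐ[F] MonoidAlgebra F (QuaternionGroup n)}

theorem map_mkq_X_pow (hπ : π (mkq F (2 * n) X) = MonoidAlgebra.of F _ (a 1)) (k : ℕ) :
    π (mkq F (2 * n) X ^ k) = MonoidAlgebra.of F _ (a k) := by
  rw [map_pow, hπ, ← map_pow, a_one_pow]

variable (π) in
noncomputable def quaternionDecomp :
    Rq F (2 * n) × Rq F (2 * n) →ₗ[F] MonoidAlgebra F (QuaternionGroup n) :=
  π.toLinearMap.coprod (LinearMap.mulRight F (MonoidAlgebra.of F _ (xa 0)) ∘ₗ π.toLinearMap)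

theorem quaternionDecomp_apply (z w : Rq F (2 * n)) :
    quaternionDecomp π (z, w) = π z + π w * MonoidAlgebra.of F _ (xa 0) :=
  rfl

theorem quaternionDecomp_mul {c : Rq F (2 * n)} (hc : Commute (π c) (MonoidAlgebra.of F _ (xa 0)))
    (z w : Rq F (2 * n)) :
    quaternionDecomp π (z * c, w * c) = quaternionDecomp π (z, w) * π c := by
  simp only [quaternionDecomp_apply, map_mul, add_mul, mul_assoc, hc.eq]

theorem surjective_quaternionDecomp [NeZero n]
    (hπ : π (mkq F (2 * n) X) = MonoidAlgebra.of F _ (a 1)) :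
    Function.Surjective (quaternionDecomp π) := by
  rw [← LinearMap.range_eq_top, Submodule.eq_top_iff']
  intro w
  induction w using MonoidAlgebra.induction_on with
  | of g =>
    rcases g with i | i
    · refine ⟨(mkq F (2 * n) X ^ i.val, 0), ?_⟩
      rw [quaternionDecomp_apply, map_mkq_X_pow hπ, ZMod.natCast_zmod_val, map_zero, zero_mul,
        add_zero]
    · refine ⟨(0, mkq F (2 * n) X ^ (-i).val), ?_⟩
      rw [quaternionDecomp_apply, map_mkq_X_pow hπ, ZMod.natCast_zmod_val, map_zero, zero_add,
        ← map_mul, a_mul_xa, zero_sub, neg_neg]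
  | add w w' hw hw' => exact Submodule.add_mem _ hw hw'
  | smul r w hw => exact Submodule.smul_mem _ r hw

theorem bijective_quaternionDecomp [NeZero n]
    (hπ : π (mkq F (2 * n) X) = MonoidAlgebra.of F _ (a 1)) :
    Function.Bijective (quaternionDecomp π) := by
  have hdim : finrank F (Rq F (2 * n) × Rq F (2 * n)) =
      finrank F (MonoidAlgebra F (QuaternionGroup n)) := by
    rw [Module.finrank_prod, finrank_Rq, Module.finrank_eq_card_basis (MonoidAlgebra.basis _ F),
      QuaternionGroup.card]
    ring
  exact ⟨(LinearMap.injective_iff_surjective_of_finrank_eq_finrank hdim).2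
    (surjective_quaternionDecomp hπ), surjective_quaternionDecomp hπ⟩

theorem semiconjBy_xa_zero_map [NeZero n]
    (hπ : π (mkq F (2 * n) X) = MonoidAlgebra.of F _ (a 1)) (z : Rq F (2 * n)) :
    SemiconjBy (MonoidAlgebra.of F _ (xa 0)) (π z) (π (invX F (2 * n) z)) := by
  have hX : SemiconjBy (MonoidAlgebra.of F _ (xa 0)) (π (mkq F (2 * n) X))
      (π (mkq F (2 * n) X) ^ (2 * n - 1)) := by
    have hcast : ((2 * n - 1 : ℕ) : ZMod (2 * n)) = -1 := by
      rw [Nat.cast_sub NeZero.one_le, ZMod.natCast_self, Nat.cast_one, zero_sub]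
    rw [SemiconjBy, ← map_pow, map_mkq_X_pow hπ, hπ, ← map_mul, ← map_mul, xa_mul_a,
      a_mul_xa, hcast, zero_add, zero_sub, neg_neg]
  obtain ⟨p, rfl⟩ := Ideal.Quotient.mk_surjective z
  rw [invX_mkq, ← aeval_mkq_X p, ← aeval_algHom_apply, ← aeval_algHom_apply, map_pow]
  exact hX.aeval p

theorem commute_map_xa_zero_of_invX_eq [NeZero n]
    (hπ : π (mkq F (2 * n) X) = MonoidAlgebra.of F _ (a 1)) {z : Rq F (2 * n)}
    (hz : invX F (2 * n) z = z) : Commute (π z) (MonoidAlgebra.of F _ (xa 0)) := by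
  have h := semiconjBy_xa_zero_map hπ z
  rw [hz] at h
  exact h.symm

theorem commute_of_commute_map_of_commute_xa_zero [NeZero n]
    (hπ : π (mkq F (2 * n) X) = MonoidAlgebra.of F _ (a 1))
    {c : MonoidAlgebra F (QuaternionGroup n)}
    (hc : ∀ z, Commute c (π z)) (hxa : Commute c (MonoidAlgebra.of F _ (xa 0)))
    (w : MonoidAlgebra F (QuaternionGroup n)) : Commute c w := by
  obtain ⟨⟨z, z'⟩, rfl⟩ := surjective_quaternionDecomp hπ w
  exact (hc z).add_right ((hc z').mul_right hxa)

theorem finrank_span_map_eq_two_mul [NeZero n]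
    (hπ : π (mkq F (2 * n) X) = MonoidAlgebra.of F _ (a 1))
    {c : Rq F (2 * n)} (hc : Commute (π c) (MonoidAlgebra.of F _ (xa 0))) :
    finrank F ((Ideal.span {π c}).restrictScalars F) =
      2 * finrank F ((Ideal.span {c}).restrictScalars F) := by
  set I := (Ideal.span {c}).restrictScalars F
  let Φ := LinearEquiv.ofBijective _ (bijective_quaternionDecomp hπ)
  have hspan : (Ideal.span {π c}).restrictScalars F = (I.prod I).map Φ.toLinearMap := by
    ext x
    simp only [Submodule.restrictScalars_mem, Ideal.mem_span_singleton', Submodule.mem_map,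
      Submodule.mem_prod, I]
    constructor
    · rintro ⟨r, rfl⟩
      obtain ⟨⟨z, w⟩, rfl⟩ := surjective_quaternionDecomp hπ r
      exact ⟨(z * c, w * c), ⟨⟨z, rfl⟩, ⟨w, rfl⟩⟩, quaternionDecomp_mul hc z w⟩
    · rintro ⟨⟨_, _⟩, ⟨⟨z, rfl⟩, ⟨w, rfl⟩⟩, rfl⟩
      exact ⟨quaternionDecomp π (z, w), (quaternionDecomp_mul hc z w).symm⟩
  rw [hspan, LinearEquiv.finrank_map_eq, Submodule.finrank_prod_eq]
  exact (two_mul _).symm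

end GroupAlgebra

set_option synthInstance.maxHeartbeats 400000 in
theorem stmt_17_general {F : Type*} [Field F] {n : ℕ} (hn : 1 ≤ n)
    (f : F[X]) (hmonic : f.Monic) (hirr : Irreducible f)
    (hdvd : f ∣ X ^ (2 * n) - 1) (hne : f ≠ recip f)
    (e estar : Rq F (2 * n)) (hidem : e * e = e) (hidemstar : estar * estar = estar)
    (hgen : Ideal.span {e} = Ideal.span {mkq F (2 * n) ((X ^ (2 * n) - 1) /ₘ f)})
    (hgenstar : Ideal.span {estar} =
      Ideal.span {mkq F (2 * n) ((X ^ (2 * n) - 1) /ₘ recip f)})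
    (π : Rq F (2 * n) →ₐ[F] MonoidAlgebra F (QuaternionGroup n))
    (hπ : π (mkq F (2 * n) X) =
      MonoidAlgebra.of F (QuaternionGroup n) (QuaternionGroup.a 1)) :
    (recip f).Monic ∧ Irreducible (recip f) ∧ recip f ∣ X ^ (2 * n) - 1 ∧
    (π e + π estar) * (π e + π estar) = π e + π estar ∧
    (∀ z, (π e + π estar) * z = z * (π e + π estar)) ∧
    Module.finrank F ((Ideal.span {π e + π estar}).restrictScalars F) =
      4 * f.natDegree := by
  have hN : 2 * n ≠ 0 := by omega
  have : NeZero n := ⟨by omega⟩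
  obtain ⟨g, hfg⟩ := hdvd
  have h0 := coeff_zero_ne_zero_of_dvd_X_pow_sub_one hN ⟨g, hfg⟩
  have hg0 := coeff_zero_ne_zero_of_dvd_X_pow_sub_one hN ⟨f, hfg.trans (mul_comm f g)⟩
  have hgm : g.Monic := hmonic.of_mul_monic_left (hfg ▸ monic_X_pow_sub_C 1 hN)
  have hfg' : X ^ (2 * n) - 1 = recip f * recip g := by
    rw [← recip_mul, ← hfg, recip_X_pow_sub_one hN]
  rw [show (X ^ (2 * n) - 1) /ₘ f = g by rw [hfg, mul_divByMonic_cancel_left _ hmonic]] at hgen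
  rw [show (X ^ (2 * n) - 1) /ₘ recip f = recip g by
    rw [hfg', mul_divByMonic_cancel_left _ (monic_recip h0)]] at hgenstar
  have horth : e * estar = 0 :=
    mul_eq_zero_of_mem_span_mkq (X_pow_sub_one_dvd_mul_recip hN hmonic hirr hne hfg)
      (hgen ▸ Ideal.mem_span_singleton_self e) (hgenstar ▸ Ideal.mem_span_singleton_self estar)
  have hswap : invX F (2 * n) (e + estar) = e + estar := by
    rw [map_add, invX_eq_of_span_eq hN hg0 hidem hidemstar hgen hgenstar, add_comm,
      invX_eq_of_span_eq hN (by rw [coeff_zero_recip hgm]; exact inv_ne_zero hg0) hidemstar hidem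
        hgenstar (by rw [recip_recip hgm hg0, hgen])]
  have hxa := commute_map_xa_zero_of_invX_eq hπ hswap
  rw [← map_add π e estar]
  refine ⟨monic_recip h0, irreducible_recip hmonic h0 hirr, ⟨recip g, hfg'⟩,
    ((IsIdempotentElem.add hidem hidemstar (by rw [mul_comm estar e, horth, add_zero])).map π).eq,
    commute_of_commute_map_of_commute_xa_zero hπ (fun z => (Commute.all _ z).map π) hxa, ?_⟩
  rw [finrank_span_map_eq_two_mul hπ hxa, finrank_span_add_of_mul_eq_zero hidem hidemstar horth,
    hgen, hgenstar, finrank_span_mkq_of_eq_mul hN hfg, finrank_span_mkq_of_eq_mul hN hfg',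
    natDegree_recip h0]
  ring

set_option synthInstance.maxHeartbeats 400000 in
theorem stmt_17 {F : Type*} [Field F] {n : ℕ} (hn : 1 ≤ n)
    (hchar : ((4 * n : ℕ) : F) ≠ 0)
    (f : F[X]) (hmonic : f.Monic) (hirr : Irreducible f)
    (hdvd : f ∣ X ^ (2 * n) - 1) (hne : f ≠ recip f)
    (e estar : Rq F (2 * n)) (hidem : e * e = e) (hidemstar : estar * estar = estar)
    (hgen : Ideal.span {e} = Ideal.span {mkq F (2 * n) ((X ^ (2 * n) - 1) /ₘ f)})
    (hgenstar : Ideal.span {estar} =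
      Ideal.span {mkq F (2 * n) ((X ^ (2 * n) - 1) /ₘ recip f)})
    (π : Rq F (2 * n) →ₐ[F] MonoidAlgebra F (QuaternionGroup n))
    (hπ : π (mkq F (2 * n) X) =
      MonoidAlgebra.of F (QuaternionGroup n) (QuaternionGroup.a 1)) :
    (recip f).Monic ∧ Irreducible (recip f) ∧ recip f ∣ X ^ (2 * n) - 1 ∧
    (π e + π estar) * (π e + π estar) = π e + π estar ∧
    (∀ z, (π e + π estar) * z = z * (π e + π estar)) ∧
    Module.finrank F ((Ideal.span {π e + π estar}).restrictScalars F) =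
      4 * f.natDegree :=
  stmt_17_general hn f hmonic hirr hdvd hne e estar hidem hidemstar hgen hgenstar π hπ
end
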